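/- Let W be an algebraic Weyl curvature tensor on a Euclidean vector space V of dimension n ≥ 4, extended to a map W : End(V) → End(V) via W(h) = Σᵢ W(eᵢ, ·, h eᵢ, ·). If h lies in the space E_W of endomorphisms satisfying W(x,y,hz,·) + W(y,z,hx,·) + W(z,x,hy,·) = 0, then W(hF) = W(F)h as endomorphisms of V, for every skew-symmetric endomorphism F of V. -/
import Mathlib


/- Common setup: algebraic Weyl curvature tensors on a Euclidean vector space. -/

open scoped RealInnerProductSpace
open Finset

/-- A curvature-type 4-linear tensor on `V`. -/
abbrev Tensor4 (V : Type*) [NormedAddCommGroup V] [InnerProductSpace ℝ V] : Type _ :=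
  V →ₗ[ℝ] V →ₗ[ℝ] V →ₗ[ℝ] V →ₗ[ℝ] ℝ

variable {V : Type*} [NormedAddCommGroup V] [InnerProductSpace ℝ V] [FiniteDimensional ℝ V]

/-- `W` is an algebraic Weyl curvature tensor: it has the symmetries of a curvature
tensor, satisfies the first Bianchi identity, and is totally trace-free. -/
structure IsWeylTensor (W : Tensor4 V) : Prop where
  antisym₁ : ∀ x y z u, W x y z u = - W y x z u
  antisym₂ : ∀ x y z u, W x y z u = - W x y u z
  pair_symm : ∀ x y z u, W x y z u = W z u x y
  bianchi : ∀ x y z u, W x y z u + W y z x u + W z x y u = 0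
  trace_free : ∀ (b : OrthonormalBasis (Fin (Module.finrank ℝ V)) ℝ V) (x y : V),
      ∑ i, W x (b i) y (b i) = 0

/-- The extension of `W` to endomorphisms, `W(h) = Σᵢ W(eᵢ, ·, h eᵢ, ·)`,
viewed as a bilinear form (identified with an endomorphism via the metric). -/
noncomputable def weylExt {ι : Type*} [Fintype ι]
    (W : Tensor4 V) (b : OrthonormalBasis ι ℝ V) (h : V →ₗ[ℝ] V) (v w : V) : ℝ :=
  ∑ i, W (b i) v (h (b i)) w

/-- The space `E_W`: endomorphisms `h` with `W(x,y,hz,·) + W(y,z,hx,·) + W(z,x,hy,·) = 0`. -/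
def memE (W : Tensor4 V) (h : V →ₗ[ℝ] V) : Prop :=
  ∀ x y z u, W x y (h z) u + W y z (h x) u + W z x (h y) u = 0

/-- The Lie algebra `g_W` of the symmetry group of `W`. -/
def memG (W : Tensor4 V) (h : V →ₗ[ℝ] V) : Prop :=
  ∀ x y z u, W (h x) y z u + W x (h y) z u + W x y (h z) u + W x y z (h u) = 0

/-- Skew-symmetric endomorphisms (identified with 2-forms). -/
def IsSkew (F : V →ₗ[ℝ] V) : Prop := ∀ v w, ⟪F v, w⟫ = - ⟪v, F w⟫

/-- Symmetric endomorphisms. -/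
def IsSym (F : V →ₗ[ℝ] V) : Prop := ∀ v w, ⟪F v, w⟫ = ⟪v, F w⟫

/-- The bilinear form `g(F·,·)` associated to an endomorphism `F`. -/
noncomputable def form (F : V →ₗ[ℝ] V) (v w : V) : ℝ := ⟪F v, w⟫

omit [FiniteDimensional ℝ V] in
lemma skew_shift {ι : Type*} [Fintype ι] (b : OrthonormalBasis ι ℝ V)
    {F : V →ₗ[ℝ] V} (hF : IsSkew F) (S : V →ₗ[ℝ] V →ₗ[ℝ] ℝ) :
    ∑ i, S (F (b i)) (b i) = - ∑ i, S (b i) (F (b i)) := by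
  have key : ∀ i, S (F (b i)) (b i) = ∑ j, ⟪b j, F (b i)⟫ * S (b j) (b i) := by
    intro i
    conv_lhs => rw [← b.sum_repr' (F (b i))]
    simp [smul_eq_mul]
  have key2 : ∀ j, S (b j) (F (b j)) = ∑ i, ⟪b i, F (b j)⟫ * S (b j) (b i) := by
    intro j
    conv_lhs => rw [← b.sum_repr' (F (b j))]
    simp [smul_eq_mul]
  simp only [key, key2]
  rw [Finset.sum_comm, ← Finset.sum_neg_distrib]
  refine Finset.sum_congr rfl fun j _ => ?_
  rw [← Finset.sum_neg_distrib]
  refine Finset.sum_congr rfl fun i _ => ?_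
  have : ⟪b j, F (b i)⟫ = - ⟪b i, F (b j)⟫ := by
    rw [real_inner_comm, hF]
  rw [this]; ring

/-- if `h ∈ E_W` then `W(hF) = W(F)h` for every skew-symmetric `F`. -/
theorem stmt2 (hn : 4 ≤ Module.finrank ℝ V) (W : Tensor4 V) (hW : IsWeylTensor W)
    (b : OrthonormalBasis (Fin (Module.finrank ℝ V)) ℝ V)
    (h : V →ₗ[ℝ] V) (hE : memE W h) :
    ∀ F : V →ₗ[ℝ] V, IsSkew F →
      ∀ v w, weylExt W b (h ∘ₗ F) v w = weylExt W b F (h v) w := by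
  intro F hF v w
  -- bilinear maps
  let S₁ : V →ₗ[ℝ] V →ₗ[ℝ] ℝ := LinearMap.mk₂ ℝ (fun a c => W v a (h c) w)
    (fun a a' c => by simp) (fun r a c => by simp)
    (fun a c c' => by simp) (fun r a c => by simp)
  let S₂ : V →ₗ[ℝ] V →ₗ[ℝ] ℝ := LinearMap.mk₂ ℝ (fun a c => W a c (h v) w)
    (fun a a' c => by simp) (fun r a c => by simp)
    (fun a c c' => by simp) (fun r a c => by simp)
  let S₃ : V →ₗ[ℝ] V →ₗ[ℝ] ℝ := LinearMap.mk₂ ℝ (fun a c => W a (h v) c w)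
    (fun a a' c => by simp) (fun r a c => by simp)
    (fun a c c' => by simp) (fun r a c => by simp)
  set L := ∑ i, W (b i) v (h (F (b i))) w with hL
  set R := ∑ i, W (b i) (h v) (F (b i)) w with hR
  set C := ∑ i, W (b i) (F (b i)) (h v) w with hC
  have hA : ∑ i, W v (F (b i)) (h (b i)) w = -∑ i, W v (b i) (h (F (b i))) w := by
    simpa [S₁] using skew_shift b hF S₁
  have hB : ∑ i, W (F (b i)) (b i) (h v) w = -∑ i, W (b i) (F (b i)) (h v) w := by
    simpa [S₂] using skew_shift b hF S₂
  have hD : ∑ i, W (F (b i)) (h v) (b i) w = -∑ i, W (b i) (h v) (F (b i)) w := by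
    simpa [S₃] using skew_shift b hF S₃
  -- Step 1: 2 L = C
  have step1 : 2 * L = C := by
    have hEsum : ∑ i, (W (b i) v (h (F (b i))) w + W v (F (b i)) (h (b i)) w
        + W (F (b i)) (b i) (h v) w) = 0 := by
      rw [Finset.sum_eq_zero]
      intro i _
      exact hE (b i) v (F (b i)) w
    rw [Finset.sum_add_distrib, Finset.sum_add_distrib, hA, hB] at hEsum
    have hflip : ∑ i, W v (b i) (h (F (b i))) w = -L := by
      rw [hL, ← Finset.sum_neg_distrib]
      exact Finset.sum_congr rfl fun i _ => by rw [hW.antisym₁ v (b i)]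
    rw [hflip] at hEsum
    linarith
  -- Step 2: C = 2 R
  have step2 : C = 2 * R := by
    have hBi : ∑ i, (W (b i) (F (b i)) (h v) w + W (F (b i)) (h v) (b i) w
        + W (h v) (b i) (F (b i)) w) = 0 := by
      rw [Finset.sum_eq_zero]
      intro i _
      exact hW.bianchi (b i) (F (b i)) (h v) w
    rw [Finset.sum_add_distrib, Finset.sum_add_distrib, hD] at hBi
    have hflip : ∑ i, W (h v) (b i) (F (b i)) w = -R := by
      rw [hR, ← Finset.sum_neg_distrib]
      exact Finset.sum_congr rfl fun i _ => by rw [hW.antisym₁ (h v) (b i)]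
    rw [hflip] at hBi
    rw [hC, hR]
    linarith [hBi]
  have : L = R := by linarith
  simp only [weylExt, LinearMap.comp_apply]
  exact this
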